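/- arXiv:1912.08557 — 4 statements merged into one kernel-verified Lean document; each statement's English description precedes it below -/
import Mathlib

section
/- Let r > 0 and let f be holomorphic and nowhere vanishing on the punctured disk D(0,r)∖{0} = {z ∈ ℂ : 0 < |z| < r}, and suppose f does not extend to a function meromorphic at 0. Then for every c ∈ ℂ∖{0} and every ε > 0 there exists z with 0 < |z| < ε and f(z) = c; in particular f takes every nonzero complex value infinitely often in every punctured neighborhood of 0. -/
/-!
Schottky's theorem: a holomorphic `g` on a disk omitting `0` and `1` with `‖g 0‖ ≤ 1` is bounded on
a smaller disk by an absolute constant. Writing `g = exp (2πi cosh² w)`, the holomorphic `w` avoids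
the `4`-net `{s | cosh² s ∈ ℕ + 1}`, so a Bloch-type theorem bounds `w'`, hence `w` and `g`.

If `f` omitted `c ≠ 0` near `0`, it would omit both `0` and `c`. Either `‖f‖ ≥ ‖c‖` near `0`, and
`1 / f` is bounded there, or there are points `a → 0` with `‖f a‖ ≤ ‖c‖`; Schottky's theorem for
`w ↦ f (a e^w) / c` then bounds `f` on the circles `‖z‖ = ‖a‖`, and the maximum principle on the
annuli between them bounds `f` near `0`. In both cases the singularity would be removable or a pole.
So the solutions of `f z = c` accumulate at `0`, and there are infinitely many of them.
-/

open Filter Topology Metric Set Complex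
open scoped Real

theorem exists_log_on_ball {g : ℂ → ℂ} {c : ℂ} {R : ℝ} (hR : 0 < R)
    (hg : DifferentiableOn ℂ g (ball c R)) (hg0 : ∀ z ∈ ball c R, g z ≠ 0) :
    ∃ φ : ℂ → ℂ, DifferentiableOn ℂ φ (ball c R) ∧ (∀ z ∈ ball c R, exp (φ z) = g z) ∧
      φ c = log (g c) := by
  have hq : DifferentiableOn ℂ (fun z => deriv g z / g z) (ball c R) :=
    (hg.analyticOnNhd isOpen_ball).deriv.differentiableOn.div hg hg0
  obtain ⟨φ, hφc, hφ⟩ := hq.isExactOn_ball.with_val_at c (log (g c))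
  have hderiv : ∀ z ∈ ball c R, HasDerivAt (fun w => g w * exp (-φ w)) 0 z := by
    intro z hz
    have hgz := (hg.differentiableAt (isOpen_ball.mem_nhds hz)).hasDerivAt
    refine (hgz.mul (hφ z hz).neg.cexp).congr_deriv ?_
    field_simp [hg0 z hz]
    ring
  have hconst : ∀ z ∈ ball c R, g z * exp (-φ z) = g c * exp (-φ c) := fun z hz =>
    isOpen_ball.is_const_of_deriv_eq_zero (convex_ball c R).isPreconnected
      (fun w hw => (hderiv w hw).differentiableAt.differentiableWithinAt)
      (fun w hw => (hderiv w hw).deriv) hz (mem_ball_self hR)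
  refine ⟨φ, fun z hz => (hφ z hz).differentiableAt.differentiableWithinAt, fun z hz => ?_, hφc⟩
  have h := hconst z hz
  rw [hφc, exp_neg, exp_neg, exp_log (hg0 c (mem_ball_self hR)),
    mul_inv_cancel₀ (hg0 c (mem_ball_self hR)), mul_inv_eq_one₀ (exp_ne_zero _)] at h
  exact h.symm

theorem exists_sq_eq_on_ball {g : ℂ → ℂ} {c : ℂ} {R : ℝ} (hR : 0 < R)
    (hg : DifferentiableOn ℂ g (ball c R)) (hg0 : ∀ z ∈ ball c R, g z ≠ 0) :
    ∃ s : ℂ → ℂ, DifferentiableOn ℂ s (ball c R) ∧ ∀ z ∈ ball c R, s z ^ 2 = g z := by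
  obtain ⟨φ, hφd, hφ, -⟩ := exists_log_on_ball hR hg hg0
  refine ⟨fun z => exp (φ z / 2), (hφd.div_const 2).cexp, fun z hz => ?_⟩
  rw [← exp_nat_mul, ← hφ z hz]
  ring_nf

theorem norm_log_le_of_norm_le_of_norm_inv_le {ζ : ℂ} {K : ℝ} (hζ : ζ ≠ 0) (h : ‖ζ‖ ≤ K)
    (h' : ‖ζ⁻¹‖ ≤ K) : ‖log ζ‖ ≤ Real.log K + π := by
  have hpos : 0 < ‖ζ‖ := norm_pos_iff.2 hζ
  have habs : |Real.log ‖ζ‖| ≤ Real.log K := by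
    rw [norm_inv] at h'
    refine abs_le.2 ⟨?_, Real.log_le_log hpos h⟩
    rw [neg_le, ← Real.log_inv]
    exact Real.log_le_log (by positivity) h'
  calc ‖log ζ‖ ≤ |(log ζ).re| + |(log ζ).im| := norm_le_abs_re_add_abs_im _
    _ ≤ Real.log K + π := by
      rw [log_re, log_im]
      exact add_le_add habs (abs_arg_le_pi ζ)

theorem exists_cosh_sq_eq_on_ball {a : ℂ → ℂ} {c : ℂ} {R : ℝ} (hR : 0 < R)
    (ha : DifferentiableOn ℂ a (ball c R)) (ha0 : ∀ z ∈ ball c R, a z ≠ 0)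
    (ha1 : ∀ z ∈ ball c R, a z ≠ 1) :
    ∃ w : ℂ → ℂ, DifferentiableOn ℂ w (ball c R) ∧ (∀ z ∈ ball c R, cosh (w z) ^ 2 = a z) ∧
      ‖w c‖ ≤ Real.log (2 * ‖a c‖ + 3) + π := by
  obtain ⟨p, hpd, hp⟩ := exists_sq_eq_on_ball hR ha ha0
  obtain ⟨q, hqd, hq⟩ := exists_sq_eq_on_ball hR (ha.sub_const 1)
    fun z hz => sub_ne_zero.2 (ha1 z hz)
  -- `b = √a - √(a - 1)` satisfies `b⁻¹ = √a + √(a - 1)`, so `cosh (log b) = √a`.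
  have hmul : ∀ z ∈ ball c R, (p z - q z) * (p z + q z) = 1 := fun z hz => by
    linear_combination hp z hz - hq z hz
  have hb0 : ∀ z ∈ ball c R, p z - q z ≠ 0 := fun z hz => left_ne_zero_of_mul_eq_one (hmul z hz)
  obtain ⟨w, hwd, hw, hwc⟩ := exists_log_on_ball hR (g := fun z => p z - q z) (hpd.sub hqd) hb0
  refine ⟨w, hwd, fun z hz => ?_, ?_⟩
  · rw [cosh, exp_neg, hw z hz, inv_eq_of_mul_eq_one_right (hmul z hz), ← hp z hz]
    ring
  · have hc := mem_ball_self hR (x := c)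
    have hroot : ∀ {s x : ℂ}, s ^ 2 = x → ‖s‖ ≤ ‖x‖ + 1 := fun {s x} h => by
      have : ‖s‖ ^ 2 = ‖x‖ := by rw [← norm_pow, h]
      nlinarith [norm_nonneg s]
    have hsum : ‖p c‖ + ‖q c‖ ≤ 2 * ‖a c‖ + 3 := by
      linarith [hroot (hp c hc), hroot (hq c hc), norm_sub_le (a c) 1, norm_one (α := ℂ)]
    rw [hwc]
    refine norm_log_le_of_norm_le_of_norm_inv_le (hb0 c hc)
      ((norm_sub_le _ _).trans hsum) ?_
    rw [inv_eq_of_mul_eq_one_right (hmul c hc)]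
    exact (norm_add_le _ _).trans hsum

theorem ball_subset_image_closedBall_of_norm_deriv_sub_le {u : ℂ → ℂ} {p : ℂ} {s ρ : ℝ}
    (hs : 0 < s) (hsρ : s < ρ) (hu : DifferentiableOn ℂ u (ball p ρ)) (hu' : deriv u p ≠ 0)
    (h : ∀ z ∈ closedBall p s, ‖deriv u z - deriv u p‖ ≤ ‖deriv u p‖ / 2) :
    ball (u p) (s * ‖deriv u p‖ / 4) ⊆ u '' closedBall p s := by
  have hdiff : ∀ z ∈ closedBall p s, DifferentiableAt ℂ u z := fun z hz =>
    hu.differentiableAt (isOpen_ball.mem_nhds (closedBall_subset_ball hsρ hz))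
  have hlin : ∀ z ∈ closedBall p s,
      ‖(u z - deriv u p * z) - (u p - deriv u p * p)‖ ≤ ‖deriv u p‖ / 2 * ‖z - p‖ := by
    intro z hz
    refine (convex_closedBall p s).norm_image_sub_le_of_norm_deriv_le
      (f := fun z => u z - deriv u p * z) (fun w hw => (hdiff w hw).sub (by fun_prop))
      (fun w hw => ?_) (mem_closedBall_self hs.le) hz
    rw [deriv_fun_sub (hdiff w hw) (by fun_prop), deriv_const_mul_field', deriv_id'']
    simpa using h w hw
  have hsphere : ∀ z ∈ sphere p s, s * ‖deriv u p‖ / 2 ≤ ‖u z - u p‖ := by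
    intro z hz
    have hzp : ‖z - p‖ = s := by rw [← dist_eq_norm]; exact hz
    have h1 := hlin z (sphere_subset_closedBall hz)
    have h2 := norm_sub_le (u z - u p) ((u z - deriv u p * z) - (u p - deriv u p * p))
    rw [show u z - u p - (u z - deriv u p * z - (u p - deriv u p * p)) = deriv u p * (z - p) by
      ring, norm_mul, hzp] at h2
    rw [hzp] at h1
    linarith
  have hfreq : ∃ᶠ z in 𝓝 p, u z ≠ u p := fun hev => by
    have hconst : u =ᶠ[𝓝 p] fun _ => u p := hev.mono fun z hz => not_not.1 hz
    simp [hconst.deriv_eq] at hu'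
  convert (hu.diffContOnCl_ball (closedBall_subset_ball hsρ)).ball_subset_image_closedBall hs
    hsphere hfreq using 2
  ring

theorem ball_subset_image_ball_of_norm_deriv_le {u : ℂ → ℂ} {p : ℂ} {ρ : ℝ} (hρ : 0 < ρ)
    (hu : DifferentiableOn ℂ u (ball p ρ)) (hu' : deriv u p ≠ 0)
    (h : ∀ z ∈ ball p ρ, ‖deriv u z‖ ≤ 2 * ‖deriv u p‖) :
    ball (u p) (ρ * ‖deriv u p‖ / 32) ⊆ u '' ball p ρ := by
  have hmaps : MapsTo (deriv u) (ball p ρ) (closedBall (deriv u p) (3 * ‖deriv u p‖)) :=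
    fun z hz => by
      rw [mem_closedBall, dist_eq_norm]
      linarith [norm_sub_le (deriv u z) (deriv u p), h z hz]
  have hschwarz : ∀ z ∈ closedBall p (ρ / 8),
      ‖deriv u z - deriv u p‖ ≤ ‖deriv u p‖ / 2 := by
    intro z hz
    have hz' : z ∈ ball p ρ := closedBall_subset_ball (by linarith) hz
    have := dist_le_div_mul_dist_of_mapsTo_ball
      (hu.analyticOnNhd isOpen_ball).deriv.differentiableOn hmaps hz'
    rw [dist_eq_norm] at this
    calc ‖deriv u z - deriv u p‖ ≤ 3 * ‖deriv u p‖ / ρ * dist z p := this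
      _ ≤ 3 * ‖deriv u p‖ / ρ * (ρ / 8) := by gcongr; exact hz
      _ ≤ ‖deriv u p‖ / 2 := by field_simp; linarith [norm_nonneg (deriv u p)]
  calc ball (u p) (ρ * ‖deriv u p‖ / 32) = ball (u p) (ρ / 8 * ‖deriv u p‖ / 4) := by ring_nf
    _ ⊆ u '' closedBall p (ρ / 8) :=
      ball_subset_image_closedBall_of_norm_deriv_sub_le (by positivity) (by linarith) hu hu'
        hschwarz
    _ ⊆ u '' ball p ρ := image_mono (closedBall_subset_ball (by linarith))

theorem exists_ball_forall_le_two_mul {φ : ℂ → ℝ} {c : ℂ} {R : ℝ}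
    (hφ : ContinuousOn φ (closedBall c R)) (hφ0 : ∀ z, 0 ≤ φ z) (hφc : 0 < φ c) (hR : 0 < R) :
    ∃ p ρ, 0 < ρ ∧ ball p ρ ⊆ ball c R ∧ R * φ c ≤ 2 * ρ * φ p ∧
      ∀ z ∈ ball p ρ, φ z ≤ 2 * φ p := by
  have hcont : ContinuousOn (fun z => (R - dist z c) * φ z) (closedBall c R) :=
    (continuous_const.sub (continuous_id.dist continuous_const)).continuousOn.mul hφ
  -- `p` maximizes `(R - dist z c) * φ z`; then `ρ = (R - dist p c) / 2` works
  obtain ⟨p, hp, hmax⟩ := (isCompact_closedBall c R).exists_isMaxOn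
    ⟨c, mem_closedBall_self hR.le⟩ hcont
  rw [isMaxOn_iff] at hmax
  have hcp : R * φ c ≤ (R - dist p c) * φ p := by
    simpa using hmax c (mem_closedBall_self hR.le)
  have hpc : dist p c < R := by
    by_contra! h
    nlinarith [hφ0 p, mul_pos hR hφc]
  refine ⟨p, (R - dist p c) / 2, by linarith, fun z hz => ?_, by linarith, fun z hz => ?_⟩
  · rw [mem_ball] at hz ⊢
    linarith [dist_triangle z p c]
  · have hzc : (R - dist p c) / 2 < R - dist z c := by
      rw [mem_ball] at hz; linarith [dist_triangle z p c]
    have hz' : (R - dist z c) * φ z ≤ (R - dist p c) * φ p :=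
      hmax z (mem_closedBall.2 (by linarith))
    nlinarith [hφ0 z]

theorem exists_ball_subset_image_ball {u : ℂ → ℂ} {c : ℂ} {R : ℝ} (hR : 0 < R)
    (hu : DifferentiableOn ℂ u (ball c (2 * R))) :
    ∃ v, ball v (R * ‖deriv u c‖ / 64) ⊆ u '' ball c (2 * R) := by
  rcases eq_or_ne (deriv u c) 0 with h | h
  · exact ⟨0, by simp [h]⟩
  have hsub : closedBall c R ⊆ ball c (2 * R) := closedBall_subset_ball (by linarith)
  obtain ⟨p, ρ, hρ, hpρ, hK, hle⟩ := exists_ball_forall_le_two_mul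
    ((hu.analyticOnNhd isOpen_ball).deriv.continuousOn.mono hsub).norm (fun _ => norm_nonneg _)
    (norm_pos_iff.2 h) hR
  have hp : deriv u p ≠ 0 := by
    rintro hp; rw [hp, norm_zero] at hK; nlinarith [norm_pos_iff.2 h]
  have hball : ball p ρ ⊆ ball c (2 * R) := hpρ.trans (ball_subset_ball (by linarith))
  refine ⟨u p, fun w hw => image_mono hball <|
    ball_subset_image_ball_of_norm_deriv_le hρ (hu.mono hball) hp hle ?_⟩
  rw [mem_ball] at hw ⊢
  linarith

theorem norm_deriv_le_of_forall_notMem {u : ℂ → ℂ} {c : ℂ} {R δ : ℝ} {S : Set ℂ} (hR : 0 < R)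
    (hS : ∀ v, ∃ s ∈ S, ‖v - s‖ ≤ δ) (hu : DifferentiableOn ℂ u (ball c (2 * R)))
    (huS : ∀ z ∈ ball c (2 * R), u z ∉ S) : R * ‖deriv u c‖ / 64 ≤ δ := by
  obtain ⟨v, hv⟩ := exists_ball_subset_image_ball hR hu
  obtain ⟨s, hs, hvs⟩ := hS v
  by_contra! h
  obtain ⟨z, hz, rfl⟩ := hv (show s ∈ ball v _ by rw [mem_ball', dist_eq_norm]; linarith)
  exact huS z hz hs

theorem exists_le_le_add_one_of_le_add_one {t : ℕ → ℝ} {x : ℝ} (h0 : t 0 ≤ x)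
    (hgap : ∀ n, t (n + 1) ≤ t n + 1) (hx : ∃ n, x < t n) : ∃ n, t n ≤ x ∧ x ≤ t n + 1 := by
  classical
  set N := Nat.find hx
  have hxN : x < t N := Nat.find_spec hx
  obtain ⟨n, hn⟩ : ∃ n, N = n + 1 :=
    Nat.exists_eq_succ_of_ne_zero (by rintro h; rw [h] at hxN; linarith)
  refine ⟨n, not_lt.1 (Nat.find_min hx (by omega)), ?_⟩
  rw [hn] at hxN
  linarith [hgap n]

theorem Real.arcosh_sqrt_succ_le (n : ℕ) :
    Real.arcosh √((n + 1 : ℕ) + 1) ≤ Real.arcosh √(n + 1) + 1 := by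
  set t := Real.arcosh √(n + 1)
  have h1 : (1 : ℝ) ≤ √(n + 1) := Real.one_le_sqrt.2 (by linarith [n.cast_nonneg (α := ℝ)])
  have ht : 0 ≤ t := Real.arcosh_nonneg h1
  have hcosh1 : 3 / 2 ≤ Real.cosh 1 := by
    rw [Real.cosh_eq, Real.exp_neg]
    nlinarith [Real.exp_one_gt_d9, Real.exp_one_lt_d9, mul_inv_cancel₀ (Real.exp_pos 1).ne',
      inv_pos.2 (Real.exp_pos 1)]
  have hstep : √((n + 1 : ℕ) + 1) ≤ Real.cosh (t + 1) := by
    have hsq : √((n + 1 : ℕ) + 1) ≤ 3 / 2 * √(n + 1) := by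
      rw [Real.sqrt_le_left (by positivity)]
      push_cast
      nlinarith [Real.sq_sqrt (show (0 : ℝ) ≤ n + 1 by positivity), n.cast_nonneg (α := ℝ)]
    rw [Real.cosh_add, Real.cosh_arcosh h1]
    nlinarith [Real.sinh_nonneg_iff.2 ht, Real.sinh_pos_iff.2 one_pos]
  calc Real.arcosh √((n + 1 : ℕ) + 1) ≤ Real.arcosh (Real.cosh (t + 1)) :=
        (Real.arcosh_le_arcosh (by positivity) (Real.cosh_pos _)).2 hstep
    _ = t + 1 := Real.arcosh_cosh (by linarith)

theorem Real.exists_cosh_sq_eq_natCast_add_one_near (x : ℝ) :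
    ∃ t : ℝ, (∃ n : ℕ, Real.cosh t ^ 2 = n + 1) ∧ |x - t| ≤ 1 := by
  wlog hx : 0 ≤ x generalizing x
  · obtain ⟨t, ht, hxt⟩ := this (-x) (by linarith)
    exact ⟨-t, by simpa using ht, by rw [← abs_neg]; convert hxt using 2; ring⟩
  have hone : ∀ n : ℕ, (1 : ℝ) ≤ √(n + 1) := fun n =>
    Real.one_le_sqrt.2 (by linarith [n.cast_nonneg (α := ℝ)])
  have hunbdd : ∃ n : ℕ, x < Real.arcosh √(n + 1) := by
    obtain ⟨n, hn⟩ := exists_nat_gt (Real.cosh x ^ 2)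
    refine ⟨n, ?_⟩
    calc x = Real.arcosh (Real.cosh x) := (Real.arcosh_cosh hx).symm
      _ < Real.arcosh √(n + 1) := (Real.arcosh_lt_arcosh (Real.cosh_pos x) (by positivity)).2 <|
          Real.lt_sqrt_of_sq_lt (by linarith)
  obtain ⟨n, hn, hxn⟩ := exists_le_le_add_one_of_le_add_one (t := fun n => Real.arcosh √(n + 1))
    (by simpa [Real.arcosh_zero] using hx) (by exact_mod_cast Real.arcosh_sqrt_succ_le) hunbdd
  refine ⟨Real.arcosh √(n + 1), ⟨n, ?_⟩, abs_le.2 ⟨by linarith, by linarith⟩⟩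
  rw [Real.cosh_arcosh (hone n), Real.sq_sqrt (by positivity)]

theorem exists_cosh_sq_eq_natCast_add_one_near (v : ℂ) :
    ∃ s : ℂ, (∃ n : ℕ, cosh s ^ 2 = n + 1) ∧ ‖v - s‖ ≤ 4 := by
  obtain ⟨t, ⟨n, hn⟩, ht⟩ := Real.exists_cosh_sq_eq_natCast_add_one_near v.re
  set m := round (v.im / π)
  have hm : |v.im - m * π| ≤ π / 2 := by
    have := abs_sub_round (v.im / π)
    rw [show v.im - m * π = (v.im / π - m) * π by field_simp, abs_mul, abs_of_pos Real.pi_pos]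
    nlinarith [Real.pi_pos]
  have hper : Function.Periodic (fun z => cosh z ^ 2) (π * I) := fun z => by simp
  refine ⟨t + m * (π * I), ⟨n, ?_⟩, ?_⟩
  · rw [show cosh (t + m * (π * I)) ^ 2 = cosh t ^ 2 from hper.int_mul m t, ← ofReal_cosh]
    exact_mod_cast hn
  · calc ‖v - (t + m * (π * I))‖ ≤ |(v - (t + m * (π * I))).re| + |(v - (t + m * (π * I))).im| :=
          norm_le_abs_re_add_abs_im _
      _ ≤ 1 + π / 2 := by simpa using add_le_add ht hm
      _ ≤ 4 := by linarith [Real.pi_le_four]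

theorem exists_exp_two_pi_I_mul_cosh_sq_eq {g : ℂ → ℂ} {c : ℂ} {R : ℝ} (hR : 0 < R)
    (hg : DifferentiableOn ℂ g (ball c R)) (hg0 : ∀ z ∈ ball c R, g z ≠ 0)
    (hg1 : ∀ z ∈ ball c R, g z ≠ 1) :
    ∃ w : ℂ → ℂ, DifferentiableOn ℂ w (ball c R) ∧
      (∀ z ∈ ball c R, exp (2 * π * I * cosh (w z) ^ 2) = g z) ∧
      (∀ z ∈ ball c R, ∀ n : ℕ, cosh (w z) ^ 2 ≠ n + 1) ∧
      ‖w c‖ ≤ Real.log (‖log (g c)‖ / π + 3) + π := by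
  obtain ⟨φ, hφd, hφ, hφc⟩ := exists_log_on_ball hR hg hg0
  set a : ℂ → ℂ := fun z => φ z / (2 * π * I)
  have hexp : ∀ z ∈ ball c R, exp (2 * π * I * a z) = g z := fun z hz => by
    rw [mul_div_cancel₀ _ two_pi_I_ne_zero, hφ z hz]
  have hint : ∀ z ∈ ball c R, ∀ n : ℤ, a z ≠ n := fun z hz n h => hg1 z hz <| by
    rw [← hexp z hz, h, mul_comm, exp_int_mul_two_pi_mul_I]
  obtain ⟨w, hwd, hw, hwc⟩ := exists_cosh_sq_eq_on_ball (a := a) hR (hφd.div_const _)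
    (fun z hz => by exact_mod_cast hint z hz 0) (fun z hz => by exact_mod_cast hint z hz 1)
  refine ⟨w, hwd, fun z hz => by rw [hw z hz, hexp z hz],
    fun z hz n h => hint z hz (n + 1) (by rw [← hw z hz, h]; push_cast; rfl), ?_⟩
  have hnorm : ‖(2 * π * I : ℂ)‖ = 2 * π := by simp [abs_of_pos Real.pi_pos]
  convert hwc using 4
  rw [norm_div, hnorm, hφc]
  field_simp

/-- The points `s` with `cosh s ^ 2 ∈ ℕ + 1` form a `4`-net of `ℂ`, so the Bloch-type theorem bounds
`‖w'‖` by `256 / R` on `closedBall c R`. -/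
theorem norm_sub_le_of_forall_cosh_sq_ne {w : ℂ → ℂ} {c : ℂ} {R : ℝ} (hR : 0 < R)
    (hw : DifferentiableOn ℂ w (ball c (3 * R)))
    (hS : ∀ z ∈ ball c (3 * R), ∀ n : ℕ, cosh (w z) ^ 2 ≠ n + 1) :
    ∀ z ∈ closedBall c R, ‖w z - w c‖ ≤ 256 := by
  have hsub : closedBall c R ⊆ ball c (3 * R) := closedBall_subset_ball (by linarith)
  have hderiv : ∀ z ∈ closedBall c R, ‖deriv w z‖ ≤ 256 / R := by
    intro z hz
    have hball : ball z (2 * R) ⊆ ball c (3 * R) := fun y hy => by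
      rw [mem_ball] at hy ⊢
      linarith [dist_triangle y z c, mem_closedBall.1 hz]
    have := norm_deriv_le_of_forall_notMem (S := {s | ∃ n : ℕ, cosh s ^ 2 = n + 1}) hR
      exists_cosh_sq_eq_natCast_add_one_near (hw.mono hball)
      fun y hy ⟨n, hn⟩ => hS y (hball hy) n hn
    rw [le_div_iff₀ hR]
    linarith
  intro z hz
  calc ‖w z - w c‖ ≤ 256 / R * ‖z - c‖ :=
        (convex_closedBall c R).norm_image_sub_le_of_norm_deriv_le
          (fun y hy => hw.differentiableAt (isOpen_ball.mem_nhds (hsub hy))) hderiv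
          (mem_closedBall_self hR.le) hz
    _ ≤ 256 / R * R := by gcongr; exact mem_closedBall_iff_norm.1 hz
    _ = 256 := by field_simp

theorem norm_cosh_le (ζ : ℂ) : ‖cosh ζ‖ ≤ Real.exp ‖ζ‖ := by
  have h : ∀ ξ : ℂ, ‖exp ξ‖ ≤ Real.exp ‖ξ‖ := fun ξ => by
    rw [norm_exp]; exact Real.exp_le_exp.2 (re_le_norm ξ)
  calc ‖cosh ζ‖ = ‖exp ζ + exp (-ζ)‖ / 2 := by rw [cosh, norm_div]; norm_num
    _ ≤ (Real.exp ‖ζ‖ + Real.exp ‖-ζ‖) / 2 := by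
      gcongr; exact (norm_add_le _ _).trans (add_le_add (h ζ) (h (-ζ)))
    _ = Real.exp ‖ζ‖ := by rw [norm_neg]; ring

theorem norm_le_of_forall_ne_zero_one_of_half_le {g : ℂ → ℂ}
    (hg : DifferentiableOn ℂ g (ball 0 12)) (hg0 : ∀ z ∈ ball 0 12, g z ≠ 0)
    (hg1 : ∀ z ∈ ball 0 12, g z ≠ 1) (hlow : 1 / 2 ≤ ‖g 0‖) (hup : ‖g 0‖ ≤ 2) :
    ∀ z ∈ closedBall (0 : ℂ) 4, ‖g z‖ ≤ Real.exp (2 * π * Real.exp 528) := by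
  have h12 : (0 : ℝ) < 12 := by norm_num
  obtain ⟨w, hwd, hgw, hwS, hw0⟩ := exists_exp_two_pi_I_mul_cosh_sq_eq h12 hg hg0 hg1
  have hlog : ‖log (g 0)‖ ≤ Real.log 2 + π := norm_log_le_of_norm_le_of_norm_inv_le
    (hg0 0 (mem_ball_self h12)) hup
    (by rw [norm_inv]; exact inv_le_of_inv_le₀ (by norm_num) (by linarith))
  have hw0' : ‖w 0‖ ≤ 8 := by
    have : ‖log (g 0)‖ / π ≤ 2 := by
      rw [div_le_iff₀ Real.pi_pos]; linarith [Real.log_two_lt_d9, Real.pi_gt_three]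
    have := Real.log_le_log (by positivity) (show ‖log (g 0)‖ / π + 3 ≤ 5 by linarith)
    linarith [Real.log_le_sub_one_of_pos (show (0 : ℝ) < 5 by norm_num), Real.pi_le_four]
  intro z hz
  have hwz : ‖w z‖ ≤ 264 := by
    have h34 : (3 : ℝ) * 4 = 12 := by norm_num
    have := norm_sub_le_of_forall_cosh_sq_ne (R := 4) (by norm_num) (h34 ▸ hwd) (h34 ▸ hwS) z hz
    linarith [norm_sub_norm_le (w z) (w 0)]
  rw [← hgw z (closedBall_subset_ball (by norm_num) hz), norm_exp]
  refine Real.exp_le_exp.2 ((re_le_norm _).trans ?_)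
  have hcosh : ‖cosh (w z)‖ ≤ Real.exp 264 :=
    (norm_cosh_le _).trans (Real.exp_le_exp.2 hwz)
  calc ‖2 * π * I * cosh (w z) ^ 2‖ = 2 * π * ‖cosh (w z)‖ ^ 2 := by
        simp [abs_of_pos Real.pi_pos]
    _ ≤ 2 * π * Real.exp 264 ^ 2 := by gcongr
    _ = 2 * π * Real.exp 528 := by rw [← Real.exp_nat_mul]; norm_num

theorem exists_norm_le_of_forall_ne_zero_one : ∃ C : ℝ, ∀ g : ℂ → ℂ,
    DifferentiableOn ℂ g (ball 0 12) → (∀ z ∈ ball 0 12, g z ≠ 0) →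
    (∀ z ∈ ball 0 12, g z ≠ 1) → ‖g 0‖ ≤ 1 → ∀ z ∈ closedBall (0 : ℂ) 4, ‖g z‖ ≤ C := by
  refine ⟨Real.exp (2 * π * Real.exp 528) + 1, fun g hg hg0 hg1 hup z hz => ?_⟩
  rcases le_or_gt (1 / 2) ‖g 0‖ with hlow | hlow
  · linarith [norm_le_of_forall_ne_zero_one_of_half_le hg hg0 hg1 hlow (by linarith) z hz]
  · have h := norm_le_of_forall_ne_zero_one_of_half_le (g := fun z => 1 - g z)
      ((differentiableOn_const 1).sub hg) (fun z hz h => hg1 z hz (sub_eq_zero.1 h).symm)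
      (fun z hz h => hg0 z hz (by simpa using h))
      (by linarith [norm_sub_norm_le (1 : ℂ) (g 0), norm_one (α := ℂ)])
      (by linarith [norm_sub_le (1 : ℂ) (g 0), norm_one (α := ℂ)]) z hz
    linarith [norm_sub_norm_le (g z) 1, norm_one (α := ℂ), norm_sub_rev (g z) 1]

theorem exists_norm_le_on_sphere_of_forall_ne {c : ℂ} (hc : c ≠ 0) : ∃ C : ℝ,
    ∀ (f : ℂ → ℂ) (R : ℝ),
      (∀ z ∈ ball (0 : ℂ) R \ {0}, DifferentiableAt ℂ f z ∧ f z ≠ 0 ∧ f z ≠ c) →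
      ∀ a : ℂ, a ≠ 0 → ‖a‖ * Real.exp 12 < R → ‖f a‖ ≤ ‖c‖ →
        ∀ z : ℂ, ‖z‖ = ‖a‖ → ‖f z‖ ≤ C := by
  obtain ⟨C, hC⟩ := exists_norm_le_of_forall_ne_zero_one
  refine ⟨‖c‖ * C, fun f R hf a ha haR hfa z hz => ?_⟩
  -- Schottky's theorem applied to `w ↦ f (a * exp w) / c`
  have hmem : ∀ w ∈ ball (0 : ℂ) 12, a * exp w ∈ ball (0 : ℂ) R \ {0} := fun w hw => by
    refine ⟨?_, mul_ne_zero ha (exp_ne_zero w)⟩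
    rw [mem_ball_zero_iff, norm_mul, norm_exp]
    calc ‖a‖ * Real.exp w.re ≤ ‖a‖ * Real.exp 12 := by
          gcongr; exact (re_le_norm w).trans (mem_ball_zero_iff.1 hw).le
      _ < R := haR
  have hg := hC (fun w => f (a * exp w) / c)
    (fun w hw => (((hf _ (hmem w hw)).1.comp w
      ((differentiable_exp w).const_mul a)).div_const c).differentiableWithinAt)
    (fun w hw => div_ne_zero (hf _ (hmem w hw)).2.1 hc)
    (fun w hw h => (hf _ (hmem w hw)).2.2 ((div_eq_one_iff_eq hc).1 h))
    (by rw [exp_zero, mul_one, norm_div, div_le_one (norm_pos_iff.2 hc)]; exact hfa)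
    (log (z / a)) ?_
  · have hz0 : z / a ≠ 0 := div_ne_zero (norm_ne_zero_iff.1 (hz ▸ norm_ne_zero_iff.2 ha)) ha
    rw [exp_log hz0, mul_div_cancel₀ _ ha, norm_div, div_le_iff₀ (norm_pos_iff.2 hc)] at hg
    linarith
  · rw [mem_closedBall_zero_iff]
    have hza : ‖z / a‖ = 1 := by rw [norm_div, hz, div_self (norm_ne_zero_iff.2 ha)]
    calc ‖log (z / a)‖ ≤ Real.log 1 + π := norm_log_le_of_norm_le_of_norm_inv_le
          (norm_ne_zero_iff.1 (by rw [hza]; norm_num)) hza.le (by rw [norm_inv, hza, inv_one])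
      _ ≤ 4 := by rw [Real.log_one, zero_add]; exact Real.pi_le_four

theorem meromorphicAt_of_eventually_norm_le {f : ℂ → ℂ} {c : ℂ} {C : ℝ}
    (hf : ∀ᶠ z in 𝓝[≠] c, DifferentiableAt ℂ f z) (hb : ∀ᶠ z in 𝓝[≠] c, ‖f z‖ ≤ C) :
    MeromorphicAt f c := by
  set s := {z | z ≠ c → DifferentiableAt ℂ f z ∧ ‖f z‖ ≤ C}
  have hs : s ∈ 𝓝 c := eventually_nhdsWithin_iff.1 (hf.and hb)
  have hF := differentiableOn_update_limUnder_of_bddAbove hs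
    (fun z hz => (hz.1 hz.2).1.differentiableWithinAt)
    ⟨C, by rintro _ ⟨z, hz, rfl⟩; exact (hz.1 hz.2).2⟩
  refine (hF.analyticAt hs).meromorphicAt.congr ?_
  filter_upwards [self_mem_nhdsWithin] with z hz
  exact Function.update_of_ne hz _ _

theorem norm_le_of_norm_le_on_spheres {f : ℂ → ℂ} {r₁ r₂ C : ℝ}
    (hf : ∀ w : ℂ, r₁ ≤ ‖w‖ → ‖w‖ ≤ r₂ → DifferentiableAt ℂ f w)
    (h₁ : ∀ w : ℂ, ‖w‖ = r₁ → ‖f w‖ ≤ C) (h₂ : ∀ w : ℂ, ‖w‖ = r₂ → ‖f w‖ ≤ C)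
    {z : ℂ} (hz₁ : r₁ ≤ ‖z‖) (hz₂ : ‖z‖ ≤ r₂) : ‖f z‖ ≤ C := by
  rcases hz₁.eq_or_lt with hz₁ | hz₁
  · exact h₁ z hz₁.symm
  rcases hz₂.eq_or_lt with hz₂ | hz₂
  · exact h₂ z hz₂
  set U := {w : ℂ | r₁ < ‖w‖ ∧ ‖w‖ < r₂}
  have hUo : IsOpen U :=
    (isOpen_lt continuous_const continuous_norm).inter (isOpen_lt continuous_norm continuous_const)
  have hcl : closure U ⊆ {w : ℂ | r₁ ≤ ‖w‖ ∧ ‖w‖ ≤ r₂} :=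
    closure_minimal (fun w hw => ⟨hw.1.le, hw.2.le⟩)
      ((isClosed_le continuous_const continuous_norm).inter
        (isClosed_le continuous_norm continuous_const))
  have hd : DiffContOnCl ℂ f U :=
    ⟨fun w hw => (hf w hw.1.le hw.2.le).differentiableWithinAt,
      fun w hw => (hf w (hcl hw).1 (hcl hw).2).continuousAt.continuousWithinAt⟩
  refine Complex.norm_le_of_forall_mem_frontier_norm_le
    (isBounded_ball.subset fun w hw => mem_ball_zero_iff.2 hw.2) hd (fun w hw => ?_)
    (subset_closure ⟨hz₁, hz₂⟩)
  rw [hUo.frontier_eq] at hw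
  obtain ⟨hw₁, hw₂⟩ := hcl hw.1
  rcases hw₁.eq_or_lt with hw₁ | hw₁
  · exact h₁ w hw₁.symm
  · exact h₂ w (hw₂.eq_of_not_lt fun h => hw.2 ⟨hw₁, h⟩)

theorem meromorphicAt_of_frequently_norm_le_on_sphere {f : ℂ → ℂ} {C : ℝ}
    (hf : ∀ᶠ z in 𝓝[≠] 0, DifferentiableAt ℂ f z)
    (h : ∃ᶠ t in 𝓝[>] 0, ∀ z : ℂ, ‖z‖ = t → ‖f z‖ ≤ C) : MeromorphicAt f 0 := by
  obtain ⟨ρ, hρ, hρf⟩ := Metric.mem_nhdsWithin_iff.1 hf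
  have hdiff : ∀ w : ℂ, 0 < ‖w‖ → ‖w‖ < ρ → DifferentiableAt ℂ f w := fun w hw₀ hw =>
    hρf ⟨mem_ball_zero_iff.2 hw, norm_pos_iff.1 hw₀⟩
  have hsphere : ∀ r > 0, ∃ t ∈ Ioo 0 r, ∀ z : ℂ, ‖z‖ = t → ‖f z‖ ≤ C := fun r hr =>
    (h.and_eventually (Ioo_mem_nhdsGT hr)).exists.imp fun t ht => ⟨ht.2, ht.1⟩
  obtain ⟨t₁, ⟨ht₁, ht₁ρ⟩, hC₁⟩ := hsphere ρ hρ
  refine meromorphicAt_of_eventually_norm_le (C := C) hf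
    (Metric.mem_nhdsWithin_iff.2 ⟨t₁, ht₁, fun z ⟨hz, hz0⟩ => ?_⟩)
  have hz₀ : 0 < ‖z‖ := norm_pos_iff.2 hz0
  obtain ⟨t₂, ⟨ht₂, ht₂z⟩, hC₂⟩ := hsphere ‖z‖ hz₀
  exact norm_le_of_norm_le_on_spheres (fun w hw₁ hw₂ => hdiff w (by linarith) (by linarith))
    hC₂ hC₁ ht₂z.le (mem_ball_zero_iff.1 hz).le

theorem meromorphicAt_of_eventually_ne_zero_ne {f : ℂ → ℂ} {c : ℂ} (hc : c ≠ 0)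
    (h : ∀ᶠ z in 𝓝[≠] 0, DifferentiableAt ℂ f z ∧ f z ≠ 0 ∧ f z ≠ c) : MeromorphicAt f 0 := by
  have hdiff : ∀ᶠ z in 𝓝[≠] 0, DifferentiableAt ℂ f z := h.mono fun _ hz => hz.1
  by_cases hlarge : ∀ᶠ z in 𝓝[≠] 0, ‖c‖ ≤ ‖f z‖
  · have hinv : MeromorphicAt f⁻¹ 0 := meromorphicAt_of_eventually_norm_le (C := ‖c‖⁻¹)
      ((h.and hdiff).mono fun z hz => hz.2.inv hz.1.2.1)
      (hlarge.mono fun z hz => by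
        rw [Pi.inv_apply, norm_inv]; exact inv_anti₀ (norm_pos_iff.2 hc) hz)
    simpa using hinv.inv
  obtain ⟨R, hR, hRf⟩ := Metric.mem_nhdsWithin_iff.1 h
  obtain ⟨C, hC⟩ := exists_norm_le_on_sphere_of_forall_ne hc
  refine meromorphicAt_of_frequently_norm_le_on_sphere hdiff (C := C) ?_
  have hsmall : ∀ᶠ z in 𝓝[≠] (0 : ℂ), z ≠ 0 ∧ ‖z‖ * Real.exp 12 < R := by
    refine eventually_mem_nhdsWithin.and (nhdsWithin_le_nhds ?_)
    exact (continuous_norm.mul continuous_const).continuousAt.eventually_lt continuousAt_const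
      (by simpa using hR)
  refine tendsto_norm_nhdsNE_zero.frequently
    (((not_eventually.1 hlarge).and_eventually hsmall).mono fun z ⟨hfz, hz0, hzR⟩ => ?_)
  exact hC f R (fun w hw => hRf hw) z hz0 hzR (not_le.1 hfz).le

/-- If `f` is holomorphic and nowhere vanishing on the punctured disk
`D(0,r) ∖ {0}` and does not extend meromorphically to `0`, then `f` takes every nonzero
complex value `c` in every punctured neighborhood of `0`, and in fact infinitely often. -/
theorem exp_singularity_picard
    (r : ℝ) (hr : 0 < r) (f : ℂ → ℂ)
    (hf : ∀ z ∈ Metric.ball (0 : ℂ) r \ {0}, DifferentiableAt ℂ f z)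
    (hfne : ∀ z ∈ Metric.ball (0 : ℂ) r \ {0}, f z ≠ 0)
    (hnm : ¬ MeromorphicAt f 0) :
    ∀ c : ℂ, c ≠ 0 → ∀ ε : ℝ, 0 < ε →
      (∃ z : ℂ, 0 < ‖z‖ ∧ ‖z‖ < ε ∧ f z = c) ∧
      {z : ℂ | 0 < ‖z‖ ∧ ‖z‖ < ε ∧ f z = c}.Infinite := by
  intro c hc ε hε
  have hball : ∀ᶠ z in 𝓝[≠] (0 : ℂ), z ∈ ball (0 : ℂ) (min r ε) \ {0} :=
    sdiff_mem_nhdsWithin_compl (ball_mem_nhds 0 (lt_min hr hε)) _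
  have hfreq : ∃ᶠ z in 𝓝[≠] (0 : ℂ), f z = c := fun hne =>
    hnm <| meromorphicAt_of_eventually_ne_zero_ne hc <| (hball.and hne).mono fun z ⟨hz, hzc⟩ =>
      have hz' : z ∈ ball (0 : ℂ) r \ {0} := ⟨ball_subset_ball (min_le_left r ε) hz.1, hz.2⟩
      ⟨hf z hz', hfne z hz', hzc⟩
  have hS : ∃ᶠ z in 𝓝[≠] (0 : ℂ), z ∈ {z : ℂ | 0 < ‖z‖ ∧ ‖z‖ < ε ∧ f z = c} :=
    (hfreq.and_eventually hball).mono fun z ⟨hzc, hz, hz0⟩ =>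
      ⟨norm_pos_iff.2 hz0, (mem_ball_zero_iff.1 hz).trans_le (min_le_right r ε), hzc⟩
  exact ⟨hS.exists, Set.Infinite.of_accPt (accPt_iff_frequently_nhdsNE.2 hS)⟩
end

section
/- Let n be a positive integer and let (P_j) be a sequence of nonzero complex polynomials such that each P_j has at most n distinct roots and every root of P_j has modulus at least r_j, where r_j → +∞. Suppose P_j → f locally uniformly on ℂ, where f is not identically zero. Then there exists a polynomial Q ∈ ℂ[z] with deg Q ≤ n such that f(z) = exp(Q(z)) for all z ∈ ℂ. -/
open Filter Topology

/-!
Since the roots of `Pⱼ` escape to infinity, Hurwitz's argument (the maximum modulus principle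
for `1 / Pⱼ` on a small circle around a zero of `f`) shows that `f` has no zeros.
Let `Dⱼ = ∏ (X - a)` over the distinct roots `a` of `Pⱼ`. A root of `Pⱼ` of multiplicity `m` is
a root of `Pⱼ'` of multiplicity `m - 1`, so `Pⱼ ∣ Pⱼ' Dⱼ`, and `Mⱼ = (Pⱼ' / Pⱼ) · Dⱼ / Dⱼ(0)` is
a polynomial of degree `< n`. As `Dⱼ(z) / Dⱼ(0) = ∏ (1 - z / a) → 1`, `Mⱼ → f' / f` pointwise,
and by Lagrange interpolation at `n` fixed nodes a pointwise limit of polynomials of degree `< n`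
is again one. Integrating `f' / f` gives `f = exp Q` with `deg Q ≤ n`.
-/

open Polynomial Metric Finset

namespace Polynomial

variable {K : Type*} [Field K]

theorem dvd_derivative_mul_prod_roots_toFinset [DecidableEq K] [IsAlgClosed K] [CharZero K]
    (p : K[X]) :
    p ∣ derivative p * ∏ a ∈ p.roots.toFinset, (X - C a) := by
  rcases eq_or_ne p 0 with rfl | hp
  · simp
  conv_lhs => rw [(IsAlgClosed.splits p).eq_prod_roots, prod_multiset_root_eq_finset_root]
  rw [C_mul_dvd (leadingCoeff_ne_zero.mpr hp)]
  refine prod_dvd_of_coprime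
    (fun a _ b _ hab => (pairwise_coprime_X_sub_C Function.injective_id hab).pow) fun a ha => ?_
  have hroot : p.IsRoot a := isRoot_of_mem_roots (Multiset.mem_toFinset.mp ha)
  rw [← Nat.sub_add_cancel ((rootMultiplicity_pos hp).mpr hroot), pow_succ,
    ← derivative_rootMultiplicity_of_root hroot]
  exact mul_dvd_mul (pow_rootMultiplicity_dvd _ _) (dvd_prod_of_mem _ ha)

theorem exists_derivative_mul_prod_roots_toFinset_eq [DecidableEq K] [IsAlgClosed K] [CharZero K]
    (p : K[X]) :
    ∃ q : K[X], q.degree < #p.roots.toFinset ∧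
      derivative p * ∏ a ∈ p.roots.toFinset, (X - C a) = p * q := by
  rcases eq_or_ne p 0 with rfl | hp
  · exact ⟨0, by simp⟩
  obtain ⟨q, hpq⟩ := p.dvd_derivative_mul_prod_roots_toFinset
  refine ⟨q, ?_, hpq⟩
  rcases eq_or_ne q 0 with rfl | hq
  · simp
  have hp' : derivative p ≠ 0 := by
    rintro hp'
    rw [hp', zero_mul, eq_comm, mul_eq_zero] at hpq
    exact hpq.elim hp hq
  have hdeg := congrArg natDegree hpq
  rw [natDegree_mul hp' (monic_prod_of_monic _ _ fun a _ => monic_X_sub_C a).ne_zero,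
    natDegree_mul hp hq, natDegree_finsetProd_X_sub_C_eq_card] at hdeg
  have hlt : (derivative p).natDegree < p.natDegree :=
    natDegree_derivative_lt (fun h => hp' (derivative_of_natDegree_zero h))
  rw [degree_eq_natDegree hq]
  exact_mod_cast (by omega : q.natDegree < #p.roots.toFinset)

theorem eval_prod_X_sub_C_eq_mul_prod_one_sub_div {s : Finset K} (hs : ∀ a ∈ s, a ≠ 0) (z : K) :
    (∏ a ∈ s, (X - C a)).eval z = (∏ a ∈ s, (X - C a)).eval 0 * ∏ a ∈ s, (1 - z / a) := by
  simp only [eval_prod, eval_sub, eval_X, eval_C, ← prod_mul_distrib]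
  refine prod_congr rfl fun a ha => ?_
  field_simp [hs a ha]
  ring

theorem exists_derivative_eq_of_degree_lt [CharZero K] {p : K[X]} {n : ℕ} (hp : p.degree < n) :
    ∃ Q : K[X], derivative Q = p ∧ Q.natDegree ≤ n := by
  refine ⟨∑ i ∈ p.support, C (p.coeff i / (i + 1)) * X ^ (i + 1), ?_, ?_⟩
  · conv_rhs => rw [p.as_sum_support_C_mul_X_pow]
    simp only [derivative_sum, derivative_C_mul_X_pow, add_tsub_cancel_right]
    refine sum_congr rfl fun i _ => ?_
    push_cast
    rw [div_mul_cancel₀ _ (Nat.cast_add_one_ne_zero i)]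
  · refine natDegree_sum_le_of_forall_le _ _ fun i hi => (natDegree_C_mul_X_pow_le _ _).trans ?_
    have hi : (i : WithBot ℕ) < n := (le_degree_of_ne_zero (mem_support_iff.mp hi)).trans_lt hp
    exact_mod_cast hi

end Polynomial

section

variable {𝕜 : Type*} [NormedField 𝕜]

theorem tendsto_prod_one_sub_div {ι : Type*} {l : Filter ι} {s : ι → Finset 𝕜} {r : ι → ℝ}
    {n : ℕ} (hr : Tendsto r l atTop) (hcard : ∀ j, #(s j) ≤ n) (hs : ∀ j, ∀ a ∈ s j, r j ≤ ‖a‖)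
    (z : 𝕜) : Tendsto (fun j => ∏ a ∈ s j, (1 - z / a)) l (𝓝 1) := by
  have hbound : Tendsto (fun j => Real.exp (n * ‖z‖ / r j) - 1) l (𝓝 0) := by
    simpa using ((tendsto_const_nhds.div_atTop hr).rexp).sub_const 1
  rw [tendsto_iff_norm_sub_tendsto_zero]
  refine squeeze_zero' (Eventually.of_forall fun _ => norm_nonneg _) ?_ hbound
  filter_upwards [hr.eventually_gt_atTop 0] with j hj
  have hsum : ∑ a ∈ s j, ‖-(z / a)‖ ≤ n * ‖z‖ / r j :=
    calc ∑ a ∈ s j, ‖-(z / a)‖ ≤ ∑ _a ∈ s j, ‖z‖ / r j :=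
          sum_le_sum fun a ha => by
            rw [norm_neg, norm_div]
            exact div_le_div_of_nonneg_left (norm_nonneg z) hj (hs j a ha)
      _ = #(s j) * (‖z‖ / r j) := by rw [sum_const, nsmul_eq_mul]
      _ ≤ n * ‖z‖ / r j := by
          rw [mul_div_assoc]
          gcongr
          exact_mod_cast hcard j
  calc ‖∏ a ∈ s j, (1 - z / a) - 1‖ = ‖∏ a ∈ s j, (1 + -(z / a)) - 1‖ := by
        simp only [sub_eq_add_neg]
    _ ≤ Real.exp (∑ a ∈ s j, ‖-(z / a)‖) - 1 := (s j).norm_prod_one_add_sub_one_le _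
    _ ≤ Real.exp (n * ‖z‖ / r j) - 1 := by gcongr

theorem Polynomial.eventually_eval_ne_zero_of_le_norm_roots {ι : Type*} {l : Filter ι}
    {P : ι → 𝕜[X]} {r : ι → ℝ} (hP : ∀ᶠ j in l, P j ≠ 0) (hr : Tendsto r l atTop)
    (hfar : ∀ j, ∀ z ∈ (P j).roots, r j ≤ ‖z‖) (R : ℝ) :
    ∀ᶠ j in l, ∀ z, ‖z‖ ≤ R → (P j).eval z ≠ 0 := by
  filter_upwards [hP, hr.eventually_gt_atTop R] with j hPj hrj z hz hPz
  linarith [hfar j z ((mem_roots hPj).mpr hPz)]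

end

section

variable {𝕜 : Type*} [NontriviallyNormedField 𝕜]

theorem Polynomial.exists_degree_lt_eval_eq_logDeriv_mul_prod [IsAlgClosed 𝕜] [CharZero 𝕜]
    [DecidableEq 𝕜] (p : 𝕜[X]) :
    ∃ M : 𝕜[X], M.degree < #p.roots.toFinset ∧ ∀ z, p.eval 0 ≠ 0 → p.eval z ≠ 0 →
      M.eval z = logDeriv (fun w => p.eval w) z * ∏ a ∈ p.roots.toFinset, (1 - z / a) := by
  obtain ⟨q, hq, hpq⟩ := p.exists_derivative_mul_prod_roots_toFinset_eq
  refine ⟨((∏ a ∈ p.roots.toFinset, (X - C a)).eval 0)⁻¹ • q,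
    (degree_smul_le _ _).trans_lt hq, fun z h0 hz => ?_⟩
  have hroots : ∀ a ∈ p.roots.toFinset, a ≠ 0 := by
    rintro a ha rfl
    exact h0 (isRoot_of_mem_roots (Multiset.mem_toFinset.mp ha))
  have hD0 : (∏ a ∈ p.roots.toFinset, (X - C a)).eval 0 ≠ 0 := by
    rw [eval_prod]
    exact prod_ne_zero_iff.mpr fun a ha => by simpa using hroots a ha
  have hev := congrArg (eval z) hpq
  rw [eval_mul, eval_mul, eval_prod_X_sub_C_eq_mul_prod_one_sub_div hroots] at hev
  rw [logDeriv_apply, Polynomial.deriv, eval_smul, smul_eq_mul]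
  field_simp
  linear_combination -hev

theorem Polynomial.exists_eval_eq_of_tendsto_eval [CompleteSpace 𝕜] {ι : Type*} {l : Filter ι}
    [l.NeBot] {p : ι → 𝕜[X]} {u : 𝕜 → 𝕜} {n : ℕ} (hdeg : ∀ᶠ j in l, (p j).degree < n)
    (hu : ∀ z, Tendsto (fun j => (p j).eval z) l (𝓝 (u z))) :
    ∃ q : 𝕜[X], q.degree < n ∧ ∀ z, u z = q.eval z := by
  let x : Fin n ↪ 𝕜 := Fin.valEmbedding.trans (Infinite.natEmbedding 𝕜)
  let L := Lagrange.interpolate univ x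
  refine ⟨L (u ∘ x), (Lagrange.degree_interpolate_lt _ x.injective.injOn).trans_eq (by simp),
    fun z => ?_⟩
  have hcont : Continuous fun w => (L w).eval z :=
    ((leval z).comp L).continuous_of_finiteDimensional
  have hlim : Tendsto (fun j => (L fun i => (p j).eval (x i)).eval z) l (𝓝 ((L (u ∘ x)).eval z)) :=
    (hcont.tendsto _).comp (tendsto_pi_nhds.mpr fun i => hu (x i))
  refine tendsto_nhds_unique (hu z) (hlim.congr' ?_)
  filter_upwards [hdeg] with j hj
  exact congrArg (eval z) (Lagrange.eq_interpolate x.injective.injOn (by simpa using hj)).symm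

end

namespace Complex

variable {ι : Type*} {l : Filter ι} {F : ι → ℂ → ℂ} {f : ℂ → ℂ}

theorem _root_.TendstoLocallyUniformly.differentiable [l.NeBot]
    (hF : TendstoLocallyUniformly F f l) (hFd : ∀ᶠ j in l, Differentiable ℂ (F j)) :
    Differentiable ℂ f :=
  differentiableOn_univ.mp <| (tendstoLocallyUniformlyOn_univ.mpr hF).differentiableOn
    (hFd.mono fun _ h => h.differentiableOn) isOpen_univ

theorem eventually_exists_zero_of_tendstoUniformlyOn {c : ℂ} {r : ℝ} (hr : 0 < r)
    (hF : TendstoUniformlyOn F f l (closedBall c r))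
    (hFd : ∀ᶠ j in l, DifferentiableOn ℂ (F j) (closedBall c r))
    (hf : ContinuousOn f (sphere c r)) (hfr : ∀ z ∈ sphere c r, f z ≠ 0) (hfc : f c = 0) :
    ∀ᶠ j in l, ∃ z ∈ closedBall c r, F j z = 0 := by
  obtain ⟨w, hw, hmin⟩ :=
    (isCompact_sphere c r).exists_isMinOn (NormedSpace.sphere_nonempty.mpr hr.le) hf.norm
  have hε : 0 < ‖f w‖ / 2 := half_pos (norm_pos_iff.mpr (hfr w hw))
  filter_upwards [Metric.tendstoUniformlyOn_iff.mp hF _ hε, hFd] with j hclose hdiff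
  by_contra! hne
  have hbound : ∀ z ∈ frontier (ball c r), ‖(F j z)⁻¹‖ ≤ (‖f w‖ / 2)⁻¹ := by
    intro z hz
    rw [frontier_ball c hr.ne'] at hz
    have hfz : ‖f w‖ ≤ ‖f z‖ := hmin hz
    have hFz := hclose z (sphere_subset_closedBall hz)
    rw [dist_eq_norm] at hFz
    rw [norm_inv]
    gcongr
    linarith [norm_sub_norm_le (f z) (F j z)]
  have hdiff' : DiffContOnCl ℂ (fun z => (F j z)⁻¹) (ball c r) := by
    refine DifferentiableOn.diffContOnCl ?_
    rw [closure_ball c hr.ne']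
    exact hdiff.inv hne
  have hc := norm_le_of_forall_mem_frontier_norm_le isBounded_ball hdiff' hbound
    (subset_closure (mem_ball_self hr))
  have hFc := hclose c (mem_closedBall_self hr.le)
  rw [hfc, dist_zero_left] at hFc
  rw [norm_inv, inv_le_inv₀ (norm_pos_iff.mpr (hne c (mem_closedBall_self hr.le))) hε] at hc
  linarith

theorem ne_zero_of_tendstoLocallyUniformly [l.NeBot] (hF : TendstoLocallyUniformly F f l)
    (hFd : ∀ᶠ j in l, Differentiable ℂ (F j))
    (hFzero : ∀ R, ∀ᶠ j in l, ∀ z, ‖z‖ ≤ R → F j z ≠ 0) (hne : ∃ z, f z ≠ 0) (z₀ : ℂ) :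
    f z₀ ≠ 0 := by
  intro hz₀
  have hf := hF.differentiable hFd
  obtain ⟨ρ, hρ, hρf⟩ : ∃ ρ > 0, ∀ z ∈ sphere z₀ ρ, f z ≠ 0 := by
    rcases (hf.analyticAt z₀).eventually_eq_zero_or_eventually_ne_zero with h | h
    · obtain ⟨z, hz⟩ := hne
      exact absurd ((analyticOnNhd_univ_iff_differentiable.mpr hf)
        |>.eqOn_zero_of_preconnected_of_eventuallyEq_zero isPreconnected_univ (Set.mem_univ z₀) h
        (Set.mem_univ z)) hz
    · obtain ⟨ε, hε, hball⟩ := Metric.eventually_nhds_iff_ball.mp (eventually_nhdsWithin_iff.mp h)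
      refine ⟨ε / 2, half_pos hε, fun z hz => hball z ?_ (ne_of_mem_sphere hz (half_pos hε).ne')⟩
      rw [mem_ball, mem_sphere.mp hz]
      exact half_lt_self hε
  have hzero := eventually_exists_zero_of_tendstoUniformlyOn hρ
    (tendstoLocallyUniformly_iff_forall_isCompact.mp hF _ (isCompact_closedBall z₀ ρ))
    (hFd.mono fun _ h => h.differentiableOn) hf.continuous.continuousOn hρf hz₀
  obtain ⟨j, ⟨z, hz, hFz⟩, hj⟩ := (hzero.and (hFzero (‖z₀‖ + ρ))).exists
  refine hj z ?_ hFz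
  calc ‖z‖ ≤ ‖z₀‖ + ‖z - z₀‖ := norm_le_norm_add_norm_sub' z z₀
    _ ≤ ‖z₀‖ + ρ := by rw [← dist_eq_norm]; gcongr; exact hz

theorem exists_eq_exp_eval_of_logDeriv_eq {f : ℂ → ℂ} (hf : Differentiable ℂ f)
    (hf0 : ∀ z, f z ≠ 0) {q : ℂ[X]} {n : ℕ} (hq : q.degree < n)
    (hfq : ∀ z, logDeriv f z = q.eval z) :
    ∃ Q : ℂ[X], Q.natDegree ≤ n ∧ ∀ z, f z = exp (Q.eval z) := by
  obtain ⟨Q, hQ, hQn⟩ := exists_derivative_eq_of_degree_lt hq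
  have hderiv : ∀ x, deriv (fun z => f z * exp (-Q.eval z)) x = 0 := by
    intro x
    have hfx : deriv f x = q.eval x * f x := by
      rw [← hfq x, logDeriv_apply, div_mul_cancel₀ _ (hf0 x)]
    rw [((hf x).hasDerivAt.fun_mul (Q.hasDerivAt x).fun_neg.cexp).deriv, hfx, hQ]
    ring
  have hconst (z : ℂ) : f z * exp (-Q.eval z) = f 0 * exp (-Q.eval 0) :=
    is_const_of_deriv_eq_zero (hf.mul Q.differentiable.neg.cexp) hderiv z 0
  have hc : f 0 * exp (-Q.eval 0) ≠ 0 := mul_ne_zero (hf0 0) (exp_ne_zero _)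
  refine ⟨C (log (f 0 * exp (-Q.eval 0))) + Q, (natDegree_add_le _ _).trans (max_le (by simp) hQn),
    fun z => ?_⟩
  rw [eval_add, eval_C, exp_add, exp_log hc, ← hconst z, mul_assoc, ← exp_add, neg_add_cancel,
    exp_zero, mul_one]

end Complex

theorem limit_of_polys_with_escaping_roots_general
    (n : ℕ) (P : ℕ → Polynomial ℂ)
    (hcard : ∀ j, (P j).roots.toFinset.card ≤ n)
    (r : ℕ → ℝ) (hr : Tendsto r atTop atTop)
    (hfar : ∀ j, ∀ z ∈ (P j).roots, r j ≤ ‖z‖)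
    (f : ℂ → ℂ)
    (hconv : TendstoLocallyUniformly (fun j z => (P j).eval z) f atTop)
    (hne : ∃ z : ℂ, f z ≠ 0) :
    ∃ Q : Polynomial ℂ, Q.natDegree ≤ n ∧ ∀ z : ℂ, f z = Complex.exp (Q.eval z) := by
  have hPd : ∀ᶠ j in atTop, Differentiable ℂ fun z => (P j).eval z :=
    Eventually.of_forall fun j => (P j).differentiable
  have hf := hconv.differentiable hPd
  have hconvOn := tendstoLocallyUniformlyOn_univ.mpr hconv
  have hPne : ∀ᶠ j in atTop, P j ≠ 0 := by
    obtain ⟨z, hz⟩ := hne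
    filter_upwards [(hconvOn.tendsto_at (Set.mem_univ z)).eventually_ne hz] with j hj hPj
    exact hj (by simp [hPj])
  have hzero := eventually_eval_ne_zero_of_le_norm_roots hPne hr hfar
  have hf0 := Complex.ne_zero_of_tendstoLocallyUniformly hconv hPd hzero hne
  choose M hMdeg hM using fun j => (P j).exists_degree_lt_eval_eq_logDeriv_mul_prod
  have hlim (z : ℂ) : Tendsto (fun j => (M j).eval z) atTop (𝓝 (logDeriv f z)) := by
    have hlog := Complex.logDeriv_tendsto isOpen_univ (Set.mem_univ z) hconvOn
      (hPd.mono fun _ h => h.differentiableOn) (hf0 z)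
    have hprod := tendsto_prod_one_sub_div hr hcard
      (fun j a ha => hfar j a (Multiset.mem_toFinset.mp ha)) z
    rw [← mul_one (logDeriv f z)]
    refine (hlog.mul hprod).congr' ?_
    filter_upwards [hzero ‖z‖] with j hj
    exact (hM j z (hj 0 (by simp)) (hj z le_rfl)).symm
  obtain ⟨q, hq, hfq⟩ := exists_eval_eq_of_tendsto_eval
    (Eventually.of_forall fun j => (hMdeg j).trans_le (by exact_mod_cast hcard j)) hlim
  exact Complex.exists_eq_exp_eval_of_logDeriv_eq hf hf0 hq hfq

/-- Let `(P j)` be nonzero polynomials, each with at most `n` distinct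
roots, all of modulus at least `r j` with `r j → ∞`. If `P j → f` locally uniformly on `ℂ`
with `f` not identically zero, then `f = exp Q` for some polynomial `Q` of degree `≤ n`. -/
theorem limit_of_polys_with_escaping_roots
    (n : ℕ) (hn : 1 ≤ n) (P : ℕ → Polynomial ℂ) (hP : ∀ j, P j ≠ 0)
    (hcard : ∀ j, (P j).roots.toFinset.card ≤ n)
    (r : ℕ → ℝ) (hr : Tendsto r atTop atTop)
    (hfar : ∀ j, ∀ z ∈ (P j).roots, r j ≤ ‖z‖)
    (f : ℂ → ℂ)
    (hconv : TendstoLocallyUniformly (fun j z => (P j).eval z) f atTop)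
    (hne : ∃ z : ℂ, f z ≠ 0) :
    ∃ Q : Polynomial ℂ, Q.natDegree ≤ n ∧ ∀ z : ℂ, f z = Complex.exp (Q.eval z) :=
  limit_of_polys_with_escaping_roots_general n P hcard r hr hfar f hconv hne
end

section
/- For formal power series F = ∑_{n≥1} F_n X^n and G = ∑_{n≥1} G_n X^n over ℂ with zero constant term, define the exponential eñe product F ⋆ₑ G := -∑_{n≥1} n·F_n·G_n·X^n. For an integer k ≥ 1 and w ∈ ℂ∖{0}, let E_{k,w} := -∑_{n≥1} n^{k-1}·w^{-n}·X^n ∈ ℂ[[X]] (the expansion of R_k(X/w)). Then for every m ≥ 2, all integers k₁,…,k_m ≥ 1 and all z₁,…,z_m ∈ ℂ∖{0}: E_{k₁,z₁} ⋆ₑ E_{k₂,z₂} ⋆ₑ ⋯ ⋆ₑ E_{k_m,z_m} = E_{k₁+⋯+k_m, z₁·z₂⋯z_m}. -/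
/-- The exponential eñe product of two formal power series (with zero constant term):
`F ⋆ₑ G = -∑_{n≥1} n·Fₙ·Gₙ·Xⁿ`. -/
noncomputable def eneExp (F G : PowerSeries ℂ) : PowerSeries ℂ :=
  PowerSeries.mk fun n =>
    -((n : ℂ) * PowerSeries.coeff n F * PowerSeries.coeff n G)

/-- `E k w = -∑_{n≥1} n^(k-1)·w⁻ⁿ·Xⁿ`, the expansion of the Euler rational function
`R k (X/w)`. -/
noncomputable def eulerSeries (k : ℕ) (w : ℂ) : PowerSeries ℂ :=
  PowerSeries.mk fun n => if n = 0 then 0 else -((n : ℂ) ^ (k - 1) * (w ^ n)⁻¹)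

/-! Coefficientwise, `n · n^(a-1) · n^(b-1) = n^(a+b-1)` when `a, b ≥ 1`, and
`w⁻ⁿ · v⁻ⁿ = (w v)⁻ⁿ`, while the two signs cancel against the one in `⋆ₑ`; hence
`E_{a,w} ⋆ₑ E_{b,v} = E_{a+b,w v}`, and the `m`-fold product follows by induction along the fold. -/

lemma eneExp_eulerSeries {a b : ℕ} (ha : 1 ≤ a) (hb : 1 ≤ b) (w v : ℂ) :
    eneExp (eulerSeries a w) (eulerSeries b v) = eulerSeries (a + b) (w * v) := by
  ext n
  simp only [eneExp, eulerSeries, PowerSeries.coeff_mk]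
  rcases eq_or_ne n 0 with rfl | hn
  · simp
  · have hexp : a + b - 1 = (a - 1) + (b - 1) + 1 := by omega
    simp only [hn, if_false, hexp, pow_succ, pow_add, mul_pow, mul_inv]
    ring

lemma foldl_eneExp_eulerSeries {n : ℕ} (k : Fin n → ℕ) (z : Fin n → ℂ) (hk : ∀ i, 1 ≤ k i)
    {K : ℕ} (hK : 1 ≤ K) (W : ℂ) :
    Fin.foldl n (fun acc i => eneExp acc (eulerSeries (k i) (z i))) (eulerSeries K W)
      = eulerSeries (K + ∑ i, k i) (W * ∏ i, z i) := by
  induction n generalizing K W with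
  | zero => simp
  | succ n ih =>
    rw [Fin.foldl_succ, eneExp_eulerSeries hK (hk 0),
      ih (fun i => k i.succ) (fun i => z i.succ) (fun i => hk i.succ) (by omega),
      Fin.sum_univ_succ, Fin.prod_univ_succ, ← add_assoc, ← mul_assoc]

theorem eneExp_eulerSeries_multi_general
    (m : ℕ) (k : Fin (m + 2) → ℕ) (z : Fin (m + 2) → ℂ)
    (hk : ∀ i, 1 ≤ k i) :
    Fin.foldl (m + 1)
        (fun acc i => eneExp acc (eulerSeries (k i.succ) (z i.succ)))
        (eulerSeries (k 0) (z 0))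
      = eulerSeries (∑ i, k i) (∏ i, z i) := by
  rw [foldl_eneExp_eulerSeries (fun i => k i.succ) (fun i => z i.succ) (fun i => hk i.succ)
      (hk 0), Fin.sum_univ_succ (f := k), Fin.prod_univ_succ (f := z)]

/-- For `m ≥ 2` factors, integers `k i ≥ 1` and nonzero `z i`:
`E_{k₁,z₁} ⋆ₑ ⋯ ⋆ₑ E_{k_m,z_m} = E_{k₁+⋯+k_m, z₁⋯z_m}`. -/
theorem eneExp_eulerSeries_multi
    (m : ℕ) (k : Fin (m + 2) → ℕ) (z : Fin (m + 2) → ℂ)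
    (hk : ∀ i, 1 ≤ k i) (hz : ∀ i, z i ≠ 0) :
    Fin.foldl (m + 1)
        (fun acc i => eneExp acc (eulerSeries (k i.succ) (z i.succ)))
        (eulerSeries (k 0) (z 0))
      = eulerSeries (∑ i, k i) (∏ i, z i) :=
  eneExp_eulerSeries_multi_general m k z hk
end

section
/- For k ≥ 1 define the Euler rational functions R_k ∈ ℂ(X) recursively by R_1(X) = -X/(1-X) and R_{k+1}(X) = X·(dR_k/dX), and for w ∈ ℂ∖{0} let R_k(X/w) denote the rational function obtained by substituting X ↦ X/w. Then every rational function R ∈ ℂ(X) can be written as a finite sum R(X) = c + Q_∞(X) + Q₀(1/X) + ∑_{i=1}^N α_i · R_{k_i}(X/w_i), where c ∈ ℂ, Q₀ and Q_∞ are polynomials in ℂ[X] with zero constant term, N ≥ 0, α_i ∈ ℂ, k_i ≥ 1 are integers, and w_i ∈ ℂ∖{0}. -/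
/-!
Writing `t = (u - 1)⁻¹`, the recursion `R (k+1) = u · R k'` becomes `T ↦ -(t² + t) · T'` on
polynomials in `t`, starting from `R 1 = 1 + t`; so `R k` is a polynomial of degree exactly `k`
in `(u - 1)⁻¹`, and the constants together with the `R k (z / w)` span all polynomials in
`(z - w)⁻¹`. Partial fractions over `ℂ` write `p / q` as a polynomial plus, for each root `w`
of `q`, a polynomial in `(z - w)⁻¹`: for `w ≠ 0` this is a combination of Euler functions,
and for `w = 0` it is `Q₀(1/z)`.
-/

open Filter Topology Polynomial

/-- `R k u = (eulerPoly ℂ k).eval (u - 1)⁻¹` for `k ≥ 1`; the constant at index `0` gives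
`eulerPoly K k` degree `k` for every `k`, so that the family spans `K[X]`. -/
noncomputable def eulerPoly (K : Type*) [CommRing K] : ℕ → K[X]
  | 0 => 1
  | 1 => X + 1
  | k + 2 => -(X ^ 2 + X) * derivative (eulerPoly K (k + 1))

theorem eulerPoly_add_two (K : Type*) [CommRing K] (k : ℕ) :
    eulerPoly K (k + 2) = -(X ^ 2 + X) * derivative (eulerPoly K (k + 1)) := rfl

theorem degree_eulerPoly (K : Type*) [CommRing K] [IsDomain K] [CharZero K] (k : ℕ) :
    (eulerPoly K k).degree = k := by
  induction k using Nat.strong_induction_on with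
  | _ k ih =>
    match k, ih with
    | 0, _ => simp [eulerPoly]
    | 1, _ => rw [eulerPoly]; compute_degree!
    | k + 2, ih =>
      have hk : (eulerPoly K (k + 1)).natDegree = k + 1 :=
        natDegree_eq_of_degree_eq_some (ih (k + 1) (by omega))
      have h2 : (-(X ^ 2 + X : K[X])).degree = 2 := by rw [degree_neg]; compute_degree!
      rw [eulerPoly_add_two, degree_mul, h2, degree_derivative (by omega), hk]
      norm_num [add_comm]

theorem span_range_eulerPoly (K : Type*) [Field K] [CharZero K] :
    Submodule.span K (Set.range (eulerPoly K)) = ⊤ :=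
  Polynomial.Sequence.span (S := ⟨eulerPoly K, degree_eulerPoly K⟩) fun i =>
    isUnit_iff_ne_zero.mpr (leadingCoeff_ne_zero.mpr (Polynomial.Sequence.ne_zero _ i))

structure IsEulerFamily (R : ℕ → ℂ → ℂ) : Prop where
  one : ∀ z : ℂ, z ≠ 1 → R 1 z = -(z / (1 - z))
  succ : ∀ k : ℕ, 1 ≤ k → ∀ z : ℂ, z ≠ 1 → R (k + 1) z = z * deriv (R k) z

theorem IsEulerFamily.eq_eval_eulerPoly {R : ℕ → ℂ → ℂ} (hR : IsEulerFamily R) {k : ℕ}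
    (hk : 1 ≤ k) {u : ℂ} (hu : u ≠ 1) : R k u = (eulerPoly ℂ k).eval (u - 1)⁻¹ := by
  have hu' : u - 1 ≠ 0 := sub_ne_zero.mpr hu
  induction k, hk using Nat.le_induction generalizing u with
  | base =>
    have : 1 - u ≠ 0 := sub_ne_zero.mpr hu.symm
    rw [hR.one u hu]
    simp only [eulerPoly, eval_add, eval_X, eval_one]
    field_simp
    ring
  | succ k hk ih =>
    obtain ⟨k, rfl⟩ : ∃ j, k = j + 1 := ⟨k - 1, by omega⟩
    have hloc : R (k + 1) =ᶠ[𝓝 u] fun v => (eulerPoly ℂ (k + 1)).eval (v - 1)⁻¹ :=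
      eventually_of_mem (isOpen_ne.mem_nhds hu) fun v hv => ih hv (sub_ne_zero.mpr hv)
    have hderiv : HasDerivAt (fun v => (eulerPoly ℂ (k + 1)).eval (v - 1)⁻¹)
        ((derivative (eulerPoly ℂ (k + 1))).eval (u - 1)⁻¹ * (-1 / (u - 1) ^ 2)) u :=
      ((eulerPoly ℂ (k + 1)).hasDerivAt _).comp u (((hasDerivAt_id' u).sub_const 1).inv hu')
    rw [hR.succ _ hk u hu, hloc.deriv_eq, hderiv.deriv, eulerPoly_add_two]
    simp only [eval_mul, eval_neg, eval_add, eval_pow, eval_X]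
    field_simp
    ring

theorem exists_eval_div_prod_sub_pow_eq {F : Type*} [Field F] (s : Finset F) (n : F → ℕ)
    (p : F[X]) :
    ∃ (Q : F[X]) (P : F → F[X]), ∀ z ∉ s,
      p.eval z / ∏ w ∈ s, (z - w) ^ n w = Q.eval z + ∑ w ∈ s, (P w).eval (z - w)⁻¹ := by
  classical
  obtain ⟨Q, r, hr, hp⟩ := eq_quo_mul_prod_pow_add_sum_rem_mul_prod_pow p
    (fun w _ => monic_X_sub_C w)
    (fun _ _ _ _ h => pairwise_coprime_X_sub_C (s := id) Function.injective_id h) n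
  refine ⟨Q, fun w => ∑ j : Fin (n w), C ((r w j).coeff 0) * X ^ (n w - j), fun z hz => ?_⟩
  have hzw : ∀ w ∈ s, z - w ≠ 0 := fun w hw => sub_ne_zero.mpr (ne_of_mem_of_not_mem hw hz).symm
  have hprod : ∀ t ⊆ s, ∏ w ∈ t, (z - w) ^ n w ≠ 0 := fun t ht =>
    Finset.prod_ne_zero_iff.mpr fun w hw => pow_ne_zero _ (hzw w (ht hw))
  have hr0 : ∀ w ∈ s, ∀ j, r w j = C ((r w j).coeff 0) := fun w hw j =>
    eq_C_of_degree_le_zero (Nat.WithBot.lt_one_iff_le_zero.mp (by simpa using hr w hw j))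
  have hpz := congrArg (eval z) hp
  simp only [eval_add, eval_mul, eval_prod, eval_finsetSum, eval_pow, eval_sub, eval_X,
    eval_C] at hpz
  rw [hpz, add_div, mul_div_cancel_right₀ _ (hprod s subset_rfl), Finset.sum_div]
  congr 1
  refine Finset.sum_congr rfl fun w hw => ?_
  rw [← Finset.mul_prod_erase s _ hw, Finset.sum_div, eval_finsetSum]
  refine Finset.sum_congr rfl fun j _ => ?_
  have := hprod _ (Finset.erase_subset w s)
  rw [hr0 w hw j, eval_C, coeff_C_zero, eval_mul, eval_C, eval_pow, eval_X, inv_pow,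
    pow_sub₀ _ (hzw w hw) j.isLt.le]
  field_simp

theorem eval_eq_leadingCoeff_mul_prod_pow_rootMultiplicity {F : Type*} [Field F] [IsAlgClosed F]
    [DecidableEq F] (q : F[X]) (z : F) :
    q.eval z = q.leadingCoeff * ∏ w ∈ q.roots.toFinset, (z - w) ^ q.rootMultiplicity w := by
  conv_lhs =>
    rw [← C_leadingCoeff_mul_prod_multiset_X_sub_C (p := q) IsAlgClosed.card_roots_eq_natDegree,
      prod_multiset_root_eq_finset_root]
  simp [eval_prod]

section eulerExpandable

def eulerExpandable (R : ℕ → ℂ → ℂ) (S : Set ℂ) : Submodule ℂ (ℂ → ℂ) where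
  carrier := {f | ∃ (c : ℂ) (Qinf Q0 : ℂ[X]) (N : ℕ) (α : Fin N → ℂ) (k : Fin N → ℕ)
      (w : Fin N → ℂ),
      Qinf.coeff 0 = 0 ∧ Q0.coeff 0 = 0 ∧ (∀ i, 1 ≤ k i) ∧ (∀ i, w i ≠ 0) ∧
      ∀ z : ℂ, z ≠ 0 → z ∉ S → (∀ i, z ≠ w i) →
        f z = c + Qinf.eval z + Q0.eval z⁻¹ + ∑ i, α i * R (k i) (z / w i)}
  zero_mem' := ⟨0, 0, 0, 0, Fin.elim0, Fin.elim0, Fin.elim0, by simp, by simp, fun i => i.elim0,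
    fun i => i.elim0, fun _ _ _ _ => by simp⟩
  add_mem' := by
    rintro f g ⟨c, Qinf, Q0, N, α, k, w, hQinf, hQ0, hk, hw, hf⟩
      ⟨c', Qinf', Q0', N', α', k', w', hQinf', hQ0', hk', hw', hg⟩
    refine ⟨c + c', Qinf + Qinf', Q0 + Q0', N + N', Fin.append α α', Fin.append k k',
      Fin.append w w', by simp [hQinf, hQinf'], by simp [hQ0, hQ0'],
      Fin.addCases (by simpa using hk) (by simpa using hk'),
      Fin.addCases (by simpa using hw) (by simpa using hw'), fun z hz hzS hzw => ?_⟩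
    have hzw₁ : ∀ i, z ≠ w i := fun i => by simpa using hzw (Fin.castAdd N' i)
    have hzw₂ : ∀ i, z ≠ w' i := fun i => by simpa using hzw (Fin.natAdd N i)
    simp only [Pi.add_apply, hf z hz hzS hzw₁, hg z hz hzS hzw₂, eval_add, Fin.sum_univ_add,
      Fin.append_left, Fin.append_right]
    ring
  smul_mem' := by
    rintro a f ⟨c, Qinf, Q0, N, α, k, w, hQinf, hQ0, hk, hw, hf⟩
    refine ⟨a * c, C a * Qinf, C a * Q0, N, fun i => a * α i, k, w, by simp [hQinf],
      by simp [hQ0], hk, hw, fun z hz hzS hzw => ?_⟩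
    rw [Pi.smul_apply, smul_eq_mul, hf z hz hzS hzw]
    simp only [eval_mul, eval_C, mul_add, Finset.mul_sum, mul_assoc]

variable {R : ℕ → ℂ → ℂ}

theorem eulerExpandable_mono {S T : Set ℂ} (hST : S ⊆ T) :
    eulerExpandable R S ≤ eulerExpandable R T := by
  rintro f ⟨c, Qinf, Q0, N, α, k, w, hQinf, hQ0, hk, hw, hf⟩
  exact ⟨c, Qinf, Q0, N, α, k, w, hQinf, hQ0, hk, hw,
    fun z hz hzT hzw => hf z hz (fun hzS => hzT (hST hzS)) hzw⟩

theorem mem_eulerExpandable_of_eqOn {S : Set ℂ} {f g : ℂ → ℂ} (hg : g ∈ eulerExpandable R S)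
    (hfg : Set.EqOn f g (insert 0 S)ᶜ) : f ∈ eulerExpandable R S := by
  obtain ⟨c, Qinf, Q0, N, α, k, w, hQinf, hQ0, hk, hw, hg⟩ := hg
  refine ⟨c, Qinf, Q0, N, α, k, w, hQinf, hQ0, hk, hw, fun z hz hzS hzw => ?_⟩
  rw [hfg (by simp [hz, hzS]), hg z hz hzS hzw]

theorem eval_mem_eulerExpandable (S : Set ℂ) (P : ℂ[X]) :
    (fun z => P.eval z) ∈ eulerExpandable R S :=
  ⟨P.coeff 0, P - C (P.coeff 0), 0, 0, Fin.elim0, Fin.elim0, Fin.elim0, by simp, by simp,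
    fun i => i.elim0, fun i => i.elim0, fun _ _ _ _ => by simp⟩

theorem eval_inv_mem_eulerExpandable (S : Set ℂ) (P : ℂ[X]) :
    (fun z => P.eval z⁻¹) ∈ eulerExpandable R S :=
  ⟨P.coeff 0, 0, P - C (P.coeff 0), 0, Fin.elim0, Fin.elim0, Fin.elim0, by simp, by simp,
    fun i => i.elim0, fun i => i.elim0, fun _ _ _ _ => by simp⟩

theorem apply_div_mem_eulerExpandable (S : Set ℂ) {k : ℕ} (hk : 1 ≤ k) {w : ℂ} (hw : w ≠ 0) :
    (fun z => R k (z / w)) ∈ eulerExpandable R S :=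
  ⟨0, 0, 0, 1, fun _ => 1, fun _ => k, fun _ => w, by simp, by simp, fun _ => hk,
    fun _ => hw, fun _ _ _ _ => by simp⟩

theorem IsEulerFamily.eval_inv_div_sub_one_mem (hR : IsEulerFamily R) {w : ℂ} (hw : w ≠ 0)
    (P : ℂ[X]) : (fun z => P.eval (z / w - 1)⁻¹) ∈ eulerExpandable R {w} := by
  let evalAt : ℂ[X] →ₗ[ℂ] ℂ → ℂ := LinearMap.pi fun z => leval (z / w - 1)⁻¹
  suffices Submodule.span ℂ (Set.range (eulerPoly ℂ)) ≤ (eulerExpandable R {w}).comap evalAt by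
    exact this (span_range_eulerPoly ℂ ▸ Submodule.mem_top)
  rw [Submodule.span_le]
  rintro _ ⟨k, rfl⟩
  show (fun z => (eulerPoly ℂ k).eval (z / w - 1)⁻¹) ∈ eulerExpandable R {w}
  rcases Nat.eq_zero_or_pos k with rfl | hk
  · simpa [eulerPoly] using eval_mem_eulerExpandable (R := R) {w} 1
  · refine mem_eulerExpandable_of_eqOn (apply_div_mem_eulerExpandable _ hk hw) fun z hz => ?_
    have hzw : z / w ≠ 1 := by
      rw [Ne, div_eq_one_iff_eq hw]
      exact fun h => hz (by simp [h])
    exact (hR.eq_eval_eulerPoly hk hzw).symm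

theorem IsEulerFamily.eval_inv_sub_mem (hR : IsEulerFamily R) (w : ℂ) (P : ℂ[X]) :
    (fun z => P.eval (z - w)⁻¹) ∈ eulerExpandable R {w} := by
  rcases eq_or_ne w 0 with rfl | hw
  · simpa using eval_inv_mem_eulerExpandable {0} P
  · convert hR.eval_inv_div_sub_one_mem hw (P.comp (C w⁻¹ * X)) using 2 with z
    rw [eval_comp, eval_mul, eval_C, eval_X, div_sub_one hw, inv_div, ← mul_div_assoc,
      inv_mul_cancel₀ hw, one_div]

theorem IsEulerFamily.div_mem (hR : IsEulerFamily R) (p q : ℂ[X]) :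
    (fun z => p.eval z / q.eval z) ∈ eulerExpandable R {z | q.eval z = 0} := by
  classical
  obtain ⟨Q, P, hPQ⟩ := exists_eval_div_prod_sub_pow_eq q.roots.toFinset
    (fun w => q.rootMultiplicity w) (C q.leadingCoeff⁻¹ * p)
  have hprincipal : ∀ w ∈ q.roots.toFinset,
      (fun z => (P w).eval (z - w)⁻¹) ∈ eulerExpandable R {z | q.eval z = 0} := fun w hw =>
    eulerExpandable_mono (by simpa using (mem_roots'.mp (Multiset.mem_toFinset.mp hw)).2)
      (hR.eval_inv_sub_mem w (P w))
  refine mem_eulerExpandable_of_eqOn (Submodule.add_mem _ (eval_mem_eulerExpandable _ Q)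
    (Submodule.sum_mem _ hprincipal)) fun z hz => ?_
  have hqz : q.eval z ≠ 0 := fun h => hz (Or.inr h)
  have hzroots : z ∉ q.roots.toFinset := by simp [hqz]
  have hlc : q.leadingCoeff ≠ 0 := leadingCoeff_ne_zero.mpr fun h => hqz (by simp [h])
  simp only [Pi.add_apply, Finset.sum_apply, ← hPQ z hzroots, eval_mul, eval_C,
    eval_eq_leadingCoeff_mul_prod_pow_rootMultiplicity q z]
  field_simp

end eulerExpandable

theorem rational_decomposition_euler_general
    (R : ℕ → ℂ → ℂ)
    (hR1 : ∀ z : ℂ, z ≠ 1 → R 1 z = -(z / (1 - z)))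
    (hRrec : ∀ k : ℕ, 1 ≤ k → ∀ z : ℂ, z ≠ 1 → R (k + 1) z = z * deriv (R k) z)
    (p q : Polynomial ℂ) :
    ∃ (c : ℂ) (Qinf Q0 : Polynomial ℂ) (N : ℕ) (α : Fin N → ℂ) (k : Fin N → ℕ)
      (w : Fin N → ℂ),
      Qinf.coeff 0 = 0 ∧ Q0.coeff 0 = 0 ∧ (∀ i, 1 ≤ k i) ∧ (∀ i, w i ≠ 0) ∧
      ∀ z : ℂ, z ≠ 0 → q.eval z ≠ 0 → (∀ i, z ≠ w i) →
        p.eval z / q.eval z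
          = c + Qinf.eval z + Q0.eval z⁻¹ + ∑ i, α i * R (k i) (z / w i) :=
  IsEulerFamily.div_mem ⟨hR1, hRrec⟩ p q

/-- Let `R k : ℂ → ℂ` be the Euler rational functions, determined (away
from the pole `1`) by `R 1 z = -z/(1-z)` and `R (k+1) z = z · (R k)'(z)`. Then every
rational function `p/q` decomposes as
`p/q = c + Q∞(z) + Q₀(1/z) + ∑ i, α i · R (k i) (z / w i)` (as functions, wherever all
terms are defined), with `Q∞, Q₀` polynomials with zero constant term, `k i ≥ 1` and
`w i ≠ 0`. -/
theorem rational_decomposition_euler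
    (R : ℕ → ℂ → ℂ)
    (hR1 : ∀ z : ℂ, z ≠ 1 → R 1 z = -(z / (1 - z)))
    (hRrec : ∀ k : ℕ, 1 ≤ k → ∀ z : ℂ, z ≠ 1 → R (k + 1) z = z * deriv (R k) z)
    (p q : Polynomial ℂ) (hq : q ≠ 0) :
    ∃ (c : ℂ) (Qinf Q0 : Polynomial ℂ) (N : ℕ) (α : Fin N → ℂ) (k : Fin N → ℕ)
      (w : Fin N → ℂ),
      Qinf.coeff 0 = 0 ∧ Q0.coeff 0 = 0 ∧ (∀ i, 1 ≤ k i) ∧ (∀ i, w i ≠ 0) ∧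
      ∀ z : ℂ, z ≠ 0 → q.eval z ≠ 0 → (∀ i, z ≠ w i) →
        p.eval z / q.eval z
          = c + Qinf.eval z + Q0.eval z⁻¹ + ∑ i, α i * R (k i) (z / w i) :=
  rational_decomposition_euler_general R hR1 hRrec p q
end
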